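/- Fix real numbers a11, a12, a21, a22, σx, σy, R, ε with a22 ≠ 0, R ≠ 0, ε ≠ 0. Suppose (s11, s12, s22) solves the two-scale algebraic Riccati system. Then s12 satisfies the exact quadratic equation (ε*a12/(2*R*a22))*s12² + (a11 − a12*a21/a22 − s11/R + a22/ε)*s12 + (s11*a21/ε − a12*σy²/(2*a22)) = 0. -/
import Mathlib


/-- For the two-scale algebraic Riccati system, `s12` satisfies the
stated exact quadratic equation. -/
theorem stmt0 (a11 a12 a21 a22 σx σy R ε s11 s12 s22 : ℝ)
    (ha22 : a22 ≠ 0) (hR : R ≠ 0) (hε : ε ≠ 0)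
    (h1 : 0 = σx ^ 2 - s11 ^ 2 / R + 2 * a11 * s11 + 2 * a12 * s12)
    (h2 : 0 = a11 * s12 + a12 * s22 - s11 * s12 / R + s11 * a21 / ε + s12 * a22 / ε)
    (h3 : 0 = σy ^ 2 / ε - s12 ^ 2 / R + 2 * s12 * a21 / ε + 2 * s22 * a22 / ε) :
    ε * a12 / (2 * R * a22) * s12 ^ 2
      + (a11 - a12 * a21 / a22 - s11 / R + a22 / ε) * s12
      + (s11 * a21 / ε - a12 * σy ^ 2 / (2 * a22)) = 0 := by
  have key : ε * a12 / (2 * R * a22) * s12 ^ 2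
      + (a11 - a12 * a21 / a22 - s11 / R + a22 / ε) * s12
      + (s11 * a21 / ε - a12 * σy ^ 2 / (2 * a22))
      = (a11 * s12 + a12 * s22 - s11 * s12 / R + s11 * a21 / ε + s12 * a22 / ε)
        - ε * a12 / (2 * a22) * (σy ^ 2 / ε - s12 ^ 2 / R + 2 * s12 * a21 / ε + 2 * s22 * a22 / ε) := by
    field_simp
    ring
  rw [key, ← h2, ← h3]
  ring
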